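/- arXiv:2404.18473 — 9 statements merged into one kernel-verified Lean document; each statement's English description precedes it below -/
import Mathlib

section
/- If R is a left fusible ring, then the Hahn series ring R((Γ)) over a linearly ordered abelian group Γ is left fusible. -/
/-- `a` is a left zero-divisor of `R`. -/
def IsLeftZeroDivisor {R : Type*} [Ring R] (a : R) : Prop :=
  ∃ r : R, r ≠ 0 ∧ a * r = 0

/-- A ring is left fusible if every nonzero element is the sum of a left
zero-divisor and a non-left-zero-divisor. -/
def LeftFusible (R : Type*) [Ring R] : Prop :=
  ∀ a : R, a ≠ 0 → ∃ b c : R, IsLeftZeroDivisor b ∧ ¬ IsLeftZeroDivisor c ∧ a = b + c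

/-!
Write the leading coefficient of `a ≠ 0` as `z + u` with `z` a left zero-divisor and `u` not one,
and split `a = z tᵍ + (a - z tᵍ)` with `g` the order of `a`. If `z r = 0` then `z tᵍ · r t⁰ = 0`.
The series `a - z tᵍ` has leading coefficient `u`, and a Hahn series whose leading coefficient
is not a left zero-divisor is not one either: the coefficient of `x y` at `ord x + ord y` is the
product of the leading coefficients.
-/

theorem isLeftZeroDivisor_zero {R : Type*} [Ring R] [Nontrivial R] :
    IsLeftZeroDivisor (0 : R) :=
  ⟨1, one_ne_zero, mul_one 0⟩

namespace HahnSeries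

theorem leadingCoeff_sub_single_order {Γ R : Type*} [Zero Γ] [LinearOrder Γ] [AddGroup R]
    {x : HahnSeries Γ R} {r : R} (h : x.leadingCoeff ≠ r) :
    (x - single x.order r).leadingCoeff = x.leadingCoeff - r := by
  set y := x - single x.order r
  have hy : y.coeff x.order ≠ 0 := by
    simpa [y, ← leadingCoeff_eq, sub_eq_zero] using h
  have hord : y.order = x.order := by
    refine le_antisymm (order_le_of_coeff_ne_zero hy) (not_lt.1 fun hlt => ?_)
    refine coeff_order_eq_zero.not.2 (ne_zero_of_coeff_ne_zero hy) ?_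
    rw [coeff_sub, coeff_eq_zero_of_lt_order hlt, coeff_single_of_ne hlt.ne, sub_zero]
  rw [leadingCoeff_eq, hord, coeff_sub, coeff_single_same, ← leadingCoeff_eq]

variable {Γ R : Type*} [Ring R]

theorem isLeftZeroDivisor_single [AddCommMonoid Γ] [PartialOrder Γ] [IsOrderedCancelAddMonoid Γ]
    (g : Γ) {z : R} (hz : IsLeftZeroDivisor z) : IsLeftZeroDivisor (single g z) := by
  obtain ⟨r, hr, hzr⟩ := hz
  exact ⟨single 0 r, by simpa using hr, by rw [single_mul_single, hzr, add_zero, single_eq_zero]⟩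

theorem not_isLeftZeroDivisor_of_leadingCoeff [AddCommMonoid Γ] [LinearOrder Γ]
    [IsOrderedCancelAddMonoid Γ] {x : HahnSeries Γ R}
    (hx : ¬ IsLeftZeroDivisor x.leadingCoeff) : ¬ IsLeftZeroDivisor x := by
  rintro ⟨y, hy, hxy⟩
  refine hx ⟨y.leadingCoeff, leadingCoeff_ne_zero.2 hy, ?_⟩
  rw [← coeff_mul_order_add_order, hxy, coeff_zero]

end HahnSeries

open HahnSeries in
/-- If `R` is left fusible, then the Hahn series ring `R((Γ))` over a linearly
ordered abelian group `Γ` is left fusible. -/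
theorem leftFusible_hahnSeries {R : Type*} [Ring R] (Γ : Type*)
    [AddCommGroup Γ] [LinearOrder Γ] [IsOrderedAddMonoid Γ] (hR : LeftFusible R) :
    LeftFusible (HahnSeries Γ R) := by
  intro a ha
  have ha_lead : a.leadingCoeff ≠ 0 := leadingCoeff_ne_zero.2 ha
  have : Nontrivial R := ⟨⟨_, _, ha_lead⟩⟩
  obtain ⟨z, u, hz, hu, hzu⟩ := hR _ ha_lead
  have hu0 : u ≠ 0 := by rintro rfl; exact hu isLeftZeroDivisor_zero
  refine ⟨single a.order z, a - single a.order z, isLeftZeroDivisor_single _ hz, ?_,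
    (add_sub_cancel _ _).symm⟩
  apply not_isLeftZeroDivisor_of_leadingCoeff
  rwa [leadingCoeff_sub_single_order (by rwa [hzu, ne_eq, add_eq_left]), hzu, add_sub_cancel_left]
end

section
/- If R is a left fusible ring, then R is right nonsingular, i.e., the right singular ideal Sing(R_R) = {x ∈ R | r(x) is an essential right ideal} is zero. -/
/-- A right ideal (as a subset). -/
def IsRightIdeal {R : Type*} [Ring R] (I : Set R) : Prop :=
  0 ∈ I ∧ (∀ a ∈ I, ∀ b ∈ I, a + b ∈ I) ∧ (∀ a ∈ I, -a ∈ I) ∧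
    ∀ a ∈ I, ∀ r : R, a * r ∈ I

/-- A right ideal `I` is essential if it meets every nonzero right ideal nontrivially. -/
def IsEssentialRightIdeal {R : Type*} [Ring R] (I : Set R) : Prop :=
  IsRightIdeal I ∧ ∀ L : Set R, IsRightIdeal L → (∃ x ∈ L, x ≠ 0) →
    ∃ y, y ∈ I ∧ y ∈ L ∧ y ≠ 0

/-- If `R` is left fusible, then `R` is right nonsingular: the right singular
ideal `{x | r(x) is essential}` is zero. -/
theorem leftFusible_right_nonsingular {R : Type*} [Ring R] (hR : LeftFusible R) :
    ∀ x : R, IsEssentialRightIdeal {r : R | x * r = 0} → x = 0 := by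
  intro x hx
  by_contra hx0
  obtain ⟨b, c, ⟨s, hs0, hbs⟩, hc, hxbc⟩ := hR x hx0
  -- the right ideal sR
  have hL : IsRightIdeal {y : R | ∃ t, y = s * t} := by
    refine ⟨⟨0, by simp⟩, ?_, ?_, ?_⟩
    · rintro a ⟨t1, rfl⟩ b ⟨t2, rfl⟩; exact ⟨t1 + t2, (mul_add s t1 t2).symm⟩
    · rintro a ⟨t, rfl⟩; exact ⟨-t, (mul_neg s t).symm⟩
    · rintro a ⟨t, rfl⟩ r; exact ⟨t * r, mul_assoc s t r⟩
  obtain ⟨y, hyI, ⟨t, rfl⟩, hy0⟩ := hx.2 _ hL ⟨s, ⟨1, (mul_one s).symm⟩, hs0⟩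
  apply hc
  refine ⟨s * t, hy0, ?_⟩
  have hby : b * (s * t) = 0 := by rw [← mul_assoc, hbs, zero_mul]
  have hxy : x * (s * t) = 0 := hyI
  calc c * (s * t) = (b + c) * (s * t) - b * (s * t) := by noncomm_ring
    _ = 0 := by rw [← hxbc, hxy, hby, sub_zero]
end

section
/- If R is a left fusible ring, then the formal power series ring R[[x]] is left fusible. -/
/-!
Write `f = ∑ fᵢ Xⁱ ≠ 0` with lowest nonzero coefficient `fₙ` and split `fₙ = b + c` in `R`.
Then `f = b Xⁿ + (f - b Xⁿ)`: the monomial `b Xⁿ` is killed by the constant `r` with `b r = 0`,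
and `f - b Xⁿ` still has order `≥ n` with `Xⁿ`-coefficient `c`. If `(f - b Xⁿ) g = 0` with `g`
of order `m`, the `Xⁿ⁺ᵐ`-coefficient of the product is `c gₘ = 0`, so `c` would be a left
zero-divisor.
-/

namespace PowerSeries

theorem coeff_add_mul_of_le_order {R : Type*} [Semiring R] {φ ψ : R⟦X⟧} {n m : ℕ}
    (hφ : ↑n ≤ φ.order) (hψ : ↑m ≤ ψ.order) :
    coeff (n + m) (φ * ψ) = coeff n φ * coeff m ψ := by
  rw [coeff_mul, Finset.sum_eq_single_of_mem (n, m) (by simp)]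
  rintro ⟨i, j⟩ hij hne
  rcases trichotomy_of_add_eq_add (Finset.HasAntidiagonal.mem_antidiagonal.mp hij) with h | h | h
  · exact absurd (Prod.ext h.1 h.2) hne
  · rw [coeff_of_lt_order i (lt_of_lt_of_le (by exact_mod_cast h) hφ), zero_mul]
  · rw [coeff_of_lt_order j (lt_of_lt_of_le (by exact_mod_cast h) hψ), mul_zero]

variable {R : Type*} [Ring R]

theorem isLeftZeroDivisor_monomial {b : R} (hb : IsLeftZeroDivisor b) (n : ℕ) :
    IsLeftZeroDivisor (monomial n b) := by
  obtain ⟨r, hr, hbr⟩ := hb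
  refine ⟨C r, (map_ne_zero_iff _ C_injective).mpr hr, ?_⟩
  rw [← monomial_zero_eq_C_apply, monomial_mul_monomial, hbr, map_zero]

theorem not_isLeftZeroDivisor_of_le_order {φ : R⟦X⟧} {n : ℕ} (hφ : ↑n ≤ φ.order)
    (hn : ¬IsLeftZeroDivisor (coeff n φ)) : ¬IsLeftZeroDivisor φ := by
  rintro ⟨ψ, hψ, hφψ⟩
  refine hn ⟨coeff ψ.order.toNat ψ, coeff_order hψ, ?_⟩
  rw [← coeff_add_mul_of_le_order hφ (coe_toNat_order hψ).le, hφψ, map_zero]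

end PowerSeries

open PowerSeries in
/-- If `R` is left fusible, then the power series ring `R[[x]]` is left fusible. -/
theorem leftFusible_powerSeries {R : Type*} [Ring R] (hR : LeftFusible R) :
    LeftFusible (PowerSeries R) := by
  intro f hf
  set n := f.order.toNat
  obtain ⟨b, c, hb, hc, hbc⟩ := hR (coeff n f) (coeff_order hf)
  have hn : ↑n ≤ (f - monomial n b).order := by
    refine nat_le_order _ _ fun i hi => ?_
    simp [coeff_of_lt_order_toNat i hi, coeff_monomial, hi.ne]
  have hc' : coeff n (f - monomial n b) = c := by simp [hbc]
  refine ⟨monomial n b, f - monomial n b, isLeftZeroDivisor_monomial hb n,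
    not_isLeftZeroDivisor_of_le_order hn (hc' ▸ hc), by abel⟩
end

section
/- If R is a left fusible ring, then the polynomial ring R[x] is left fusible. -/
/-- If `R` is left fusible, then the polynomial ring `R[x]` is left fusible. -/
theorem leftFusible_polynomial {R : Type*} [Ring R] (hR : LeftFusible R) :
    LeftFusible (Polynomial R) := by
  intro f hf
  set n := f.natTrailingDegree with hn
  have ha : f.coeff n ≠ 0 := by
    rw [hn, ← Polynomial.trailingCoeff]
    exact mt Polynomial.trailingCoeff_eq_zero.mp hf
  obtain ⟨b, c, ⟨r, hr, hbr⟩, hc, habc⟩ := hR (f.coeff n) ha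
  -- R is nontrivial, so `c ≠ 0`
  have hR1 : (1 : R) ≠ 0 := by
    intro h10
    exact hr (by rw [← mul_one r, h10, mul_zero])
  have hc0 : c ≠ 0 := by
    intro h
    exact hc ⟨1, hR1, by rw [h, zero_mul]⟩
  set B : Polynomial R := Polynomial.C b * Polynomial.X ^ n with hB
  set h : Polynomial R := f - B with hh
  refine ⟨B, h, ⟨Polynomial.C r, by simpa using hr, ?_⟩, ?_, by rw [hh]; abel⟩
  · -- B is a left zero divisor
    have : Polynomial.X ^ n * Polynomial.C r = Polynomial.C r * Polynomial.X ^ n :=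
      (Polynomial.commute_X_pow (Polynomial.C r) n).eq
    rw [hB, mul_assoc, this, ← mul_assoc, ← Polynomial.C_mul, hbr]
    simp
  · -- h is not a left zero divisor
    rintro ⟨g, hg, hhg⟩
    -- coefficients of h below n vanish, and coeff h n = c
    have hlow : ∀ m < n, h.coeff m = 0 := by
      intro m hm
      rw [hh, Polynomial.coeff_sub, Polynomial.coeff_eq_zero_of_lt_natTrailingDegree hm,
        hB, Polynomial.coeff_C_mul, Polynomial.coeff_X_pow, if_neg hm.ne]
      simp
    have hcn : h.coeff n = c := by
      rw [hh, Polynomial.coeff_sub, hB, Polynomial.coeff_C_mul, Polynomial.coeff_X_pow,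
        if_pos rfl, mul_one, habc, add_sub_cancel_left]
    have hh0 : h ≠ 0 := fun h0 => hc0 (by rw [← hcn, h0, Polynomial.coeff_zero])
    have hdeg : h.natTrailingDegree = n :=
      le_antisymm (Polynomial.natTrailingDegree_le_of_ne_zero (hcn ▸ hc0))
        (Polynomial.le_natTrailingDegree hh0 hlow)
    have htc : h.trailingCoeff = c := by rw [Polynomial.trailingCoeff, hdeg, hcn]
    have key := Polynomial.coeff_mul_natTrailingDegree_add_natTrailingDegree (p := h) (q := g)
    rw [hhg, Polynomial.coeff_zero, htc] at key
    exact hc ⟨g.trailingCoeff, mt Polynomial.trailingCoeff_eq_zero.mp hg, key.symm⟩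
end

section
/- Let Γ be a linearly ordered abelian group and I a right ideal of R. Then the left annihilator in the Hahn series ring R((Γ)) of I((Γ)) equals ℓ_R(I)((Γ)), i.e., a Hahn series f annihilates I((Γ)) on the left if and only if every coefficient of f lies in the left annihilator ℓ_R(I) of I in R. -/
namespace HahnSeries

theorem coeff_single_mem {Γ R : Type*} [PartialOrder Γ] [Zero R] {S : Set R} (hS : 0 ∈ S)
    {r : R} (hr : r ∈ S) (a b : Γ) : (single a r).coeff b ∈ S := by
  rw [coeff_single]
  split_ifs
  exacts [hr, hS]

theorem mul_eq_zero_of_coeff_mul_coeff_eq_zero {Γ R : Type*} [AddCommMonoid Γ] [PartialOrder Γ]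
    [IsOrderedCancelAddMonoid Γ] [NonUnitalNonAssocSemiring R] {f g : HahnSeries Γ R}
    (h : ∀ i j, f.coeff i * g.coeff j = 0) : f * g = 0 := by
  ext γ
  rw [coeff_mul, coeff_zero]
  exact Finset.sum_eq_zero fun ij _ => h ij.1 ij.2

end HahnSeries

/-- A Hahn series `f` left-annihilates `I((Γ))` iff every coefficient of `f`
lies in the left annihilator `ℓ_R(I)` of `I` in `R`. -/
theorem hahnSeries_left_annihilator {R : Type*} [Ring R] (Γ : Type*)
    [AddCommGroup Γ] [LinearOrder Γ] [IsOrderedAddMonoid Γ] (I : Set R) (hI : IsRightIdeal I)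
    (f : HahnSeries Γ R) :
    (∀ g : HahnSeries Γ R, (∀ γ : Γ, g.coeff γ ∈ I) → f * g = 0) ↔
      ∀ γ : Γ, ∀ a ∈ I, f.coeff γ * a = 0 := by
  constructor
  · intro h γ a ha
    have hfa : f * HahnSeries.single 0 a = 0 := h _ (HahnSeries.coeff_single_mem hI.1 ha 0)
    simpa only [HahnSeries.coeff_mul_single_zero, HahnSeries.coeff_zero] using
      congrArg (HahnSeries.coeff · γ) hfa
  · exact fun h g hg => HahnSeries.mul_eq_zero_of_coeff_mul_coeff_eq_zero fun i j => h i _ (hg j)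
end

section
/- If the Hahn series ring R((Γ)) over a linearly ordered abelian group Γ is a right SA-ring, then R is a right SA-ring. -/
/-!
Lift an ideal `I` of `R` to the ideal `I[[Γ]]` of Hahn series with all coefficients in `I`;
then `r(I[[Γ]]) = r(I)[[Γ]]`. Conversely, the coefficients of the series in an ideal `K` of
`R((Γ))` form an ideal `K₀` of `R` (shifting by the monomials `X^γ` moves any coefficient to
any position, which makes `K₀` closed under addition), and a constant `x` lies in `r(K)` iff
`x ∈ r(K₀)`. Reading `r(I[[Γ]]) + r(J[[Γ]]) = r(K)` on constants gives `r(I) + r(J) = r(K₀)`.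
-/

/-- A two-sided ideal (as a subset). -/
def IsTwoSidedIdeal {S : Type*} [Ring S] (I : Set S) : Prop :=
  0 ∈ I ∧ (∀ a ∈ I, ∀ b ∈ I, a + b ∈ I) ∧ (∀ a ∈ I, -a ∈ I) ∧
    (∀ a ∈ I, ∀ r : S, a * r ∈ I) ∧ ∀ a ∈ I, ∀ r : S, r * a ∈ I

/-- The right annihilator of a subset. -/
def rAnn {S : Type*} [Ring S] (X : Set S) : Set S := {r : S | ∀ x ∈ X, x * r = 0}

/-- A ring `S` is a right SA-ring if for any two ideals `I`, `J` there is an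
ideal `K` with `r(I) + r(J) = r(K)`. -/
def IsRightSA (S : Type*) [Ring S] : Prop :=
  ∀ I J : Set S, IsTwoSidedIdeal I → IsTwoSidedIdeal J →
    ∃ K : Set S, IsTwoSidedIdeal K ∧
      {x : S | ∃ y ∈ rAnn I, ∃ z ∈ rAnn J, x = y + z} = rAnn K

open HahnSeries

section

variable {R : Type*} [Ring R]

/-- `I[[Γ]]`: the Hahn series all of whose coefficients lie in `I`. -/
def hahnLift (Γ : Type*) [PartialOrder Γ] (I : Set R) : Set (HahnSeries Γ R) :=
  {f | ∀ g, f.coeff g ∈ I}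

theorem zero_mem_rAnn (X : Set R) : (0 : R) ∈ rAnn X :=
  fun x _ => mul_zero x

def coeffSet {Γ : Type*} [PartialOrder Γ] (K : Set (HahnSeries Γ R)) : Set R :=
  {a | ∃ f ∈ K, ∃ g, f.coeff g = a}

theorem single_mem_hahnLift {I : Set R} (h0 : (0 : R) ∈ I) {a : R} (ha : a ∈ I)
    {Γ : Type*} [PartialOrder Γ] (g : Γ) :
    single g a ∈ hahnLift Γ I := by
  intro g'
  rcases eq_or_ne g' g with rfl | hne
  · simpa using ha
  · simpa [coeff_single_of_ne hne] using h0

theorem single_zero_mem_hahnLift_add_iff {A B : Set R} (hA : (0 : R) ∈ A) (hB : (0 : R) ∈ B)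
    {Γ : Type*} [Zero Γ] [PartialOrder Γ] {x : R} :
    single (0 : Γ) x ∈ {f | ∃ u ∈ hahnLift Γ A, ∃ v ∈ hahnLift Γ B, f = u + v} ↔
      x ∈ {x | ∃ y ∈ A, ∃ z ∈ B, x = y + z} := by
  constructor
  · rintro ⟨u, hu, v, hv, huv⟩
    exact ⟨u.coeff 0, hu 0, v.coeff 0, hv 0, by simpa using congrArg (coeff · 0) huv⟩
  · rintro ⟨y, hy, z, hz, rfl⟩
    exact ⟨_, single_mem_hahnLift hA hy 0, _, single_mem_hahnLift hB hz 0, single_add _ _ _⟩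

section OrderedCancelMonoid

variable {Γ : Type*} [AddCommMonoid Γ] [PartialOrder Γ] [IsOrderedCancelAddMonoid Γ]

theorem IsTwoSidedIdeal.hahnLift {I : Set R} (hI : IsTwoSidedIdeal I) :
    IsTwoSidedIdeal (hahnLift Γ I) := by
  obtain ⟨h0, hadd, hneg, hmul_right, hmul_left⟩ := hI
  refine ⟨fun _ => by simpa using h0, fun a ha b hb g => ?_, fun a ha g => ?_,
    fun a ha r g => ?_, fun a ha r g => ?_⟩
  · simpa using hadd _ (ha g) _ (hb g)
  · simpa using hneg _ (ha g)
  all_goals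
    rw [coeff_mul]
    refine Finset.sum_induction _ (· ∈ I) (fun a b ha hb => hadd a ha b hb) h0 fun ij _ => ?_
  · exact hmul_right _ (ha ij.1) _
  · exact hmul_left _ (ha ij.2) _

theorem rAnn_hahnLift {I : Set R} (h0 : (0 : R) ∈ I) :
    rAnn (hahnLift Γ I) = hahnLift Γ (rAnn I) := by
  ext f
  constructor
  · intro hf g a ha
    simpa [coeff_single_zero_mul] using
      congrArg (coeff · g) (hf _ (single_mem_hahnLift h0 ha 0))
  · intro hf x hx
    ext g
    rw [coeff_mul, coeff_zero]
    exact Finset.sum_eq_zero fun ij _ => hf ij.2 _ (hx ij.1)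

theorem single_zero_mem_rAnn_iff {K : Set (HahnSeries Γ R)} {x : R} :
    single 0 x ∈ rAnn K ↔ x ∈ rAnn (coeffSet K) := by
  constructor
  · rintro hx _ ⟨f, hf, g, rfl⟩
    simpa [coeff_mul_single_zero] using congrArg (coeff · g) (hx f hf)
  · intro hx f hf
    ext g
    rw [coeff_mul_single_zero, coeff_zero]
    exact hx _ ⟨f, hf, g, rfl⟩

end OrderedCancelMonoid

theorem IsTwoSidedIdeal.coeffSet {Γ : Type*} [AddCommGroup Γ] [PartialOrder Γ]
    [IsOrderedAddMonoid Γ] {K : Set (HahnSeries Γ R)} (hK : IsTwoSidedIdeal K) :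
    IsTwoSidedIdeal (coeffSet K) := by
  obtain ⟨h0, hadd, hneg, hmul_right, hmul_left⟩ := hK
  refine ⟨⟨0, h0, 0, rfl⟩, ?_, ?_, ?_, ?_⟩
  · rintro _ ⟨f, hf, g, rfl⟩ _ ⟨f', hf', g', rfl⟩
    have hshift : (single (g' - g) (1 : R) * f).coeff g' = f.coeff g := by
      simpa [add_sub_cancel] using
        (coeff_single_mul_add (r := (1 : R)) (x := f) (a := g) (b := g' - g))
    exact ⟨single (g' - g) 1 * f + f', hadd _ (hmul_left _ hf _) _ hf', g', by
      rw [coeff_add, hshift]⟩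
  · rintro _ ⟨f, hf, g, rfl⟩
    exact ⟨-f, hneg _ hf, g, by simp⟩
  · rintro _ ⟨f, hf, g, rfl⟩ r
    exact ⟨f * single 0 r, hmul_right _ hf _, g, coeff_mul_single_zero⟩
  · rintro _ ⟨f, hf, g, rfl⟩ r
    exact ⟨single 0 r * f, hmul_left _ hf _, g, coeff_single_zero_mul⟩

end

/-- If the Hahn series ring `R((Γ))` is a right SA-ring, then `R` is a right SA-ring. -/
theorem rightSA_of_hahnSeries {R : Type*} [Ring R] (Γ : Type*)
    [AddCommGroup Γ] [LinearOrder Γ] [IsOrderedAddMonoid Γ] (h : IsRightSA (HahnSeries Γ R)) :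
    IsRightSA R := by
  intro I J hI hJ
  obtain ⟨K, hK, hKeq⟩ := h (hahnLift Γ I) (hahnLift Γ J) hI.hahnLift hJ.hahnLift
  refine ⟨coeffSet K, hK.coeffSet, Set.ext fun x => ?_⟩
  rw [← single_zero_mem_rAnn_iff (Γ := Γ), ← hKeq, rAnn_hahnLift hI.1, rAnn_hahnLift hJ.1,
    single_zero_mem_hahnLift_add_iff (zero_mem_rAnn I) (zero_mem_rAnn J)]
end

section
/- Let U be a semiprime ideal of R, Γ a linearly ordered abelian group, and suppose R is a Σ_U-zip ring where Σ is trivial (untwisted case). Then the Hahn series ring R((Γ)) is a Σ_{U((Γ))}-zip ring, where U((Γ)) is the set of Hahn series with all coefficients in U. -/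
/-- The quotient `(U : X) = {r | x·r ∈ U for all x ∈ X}`. -/
def setQuot {S : Type*} [Ring S] (U X : Set S) : Set S :=
  {r : S | ∀ x ∈ X, x * r ∈ U}

/-- `S` is `Σ_U`-zip: for any subset `X ⊄ U` with `(U : X) = U` there is a
finite subset `Y ⊆ X` with `(U : Y) = U`. -/
def IsSigmaZip (S : Type*) [Ring S] (U : Set S) : Prop :=
  ∀ X : Set S, ¬ X ⊆ U → setQuot U X = U →
    ∃ Y : Finset S, ↑Y ⊆ X ∧ setQuot U (↑Y : Set S) = U

/-- `U((Γ))`: Hahn series with all coefficients in `U`. -/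
def hahnSeriesOver {R : Type*} [Ring R] (Γ : Type*) [AddCommGroup Γ] [LinearOrder Γ]
    [IsOrderedAddMonoid Γ] (U : Set R) : Set (HahnSeries Γ R) :=
  {f | ∀ γ : Γ, f.coeff γ ∈ U}

/-!
If `y * f` has all coefficients in a completely semiprime ideal `U`, then so does every product
`y_α f_β`. Otherwise take the least `γ` carrying a bad product `y_α f_β` with `α + β = γ` (it
exists since the supports are well ordered). In `(y f)_γ = ∑_{α + β = γ} y_α f_β ∈ U`, listed by
increasing `α`, every cross product `y_α f_{γ-α'}` with `α < α'` has exponent below `γ`, hence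
lies in `U`; semiprimality then peels off the summands one at a time, a contradiction.

Consequently `(V : Y) = V` for `V = U((Γ))` holds exactly when `(U : Y*) = U`, where `Y*` is the
set of coefficients of the series in `Y`, and the zip property transfers from `R` to `R((Γ))`
through `X ↦ X*`.
-/

lemma IsTwoSidedIdeal.exists_twoSidedIdeal {R : Type*} [Ring R] {U : Set R}
    (hU : IsTwoSidedIdeal U) : ∃ I : TwoSidedIdeal R, (I : Set R) = U :=
  ⟨TwoSidedIdeal.mk' U hU.1 (hU.2.1 _ · _ ·) (hU.2.2.1 _ ·) (hU.2.2.2.2 _ · _)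
    (hU.2.2.2.1 _ · _), TwoSidedIdeal.coe_mk' ..⟩

section setQuot

variable {S : Type*} [Ring S] {V : Set S}

lemma setQuot_anti {X Y : Set S} (h : X ⊆ Y) : setQuot V Y ⊆ setQuot V X :=
  fun _ hr x hx => hr x (h hx)

lemma subset_setQuot (hV : ∀ x v, v ∈ V → x * v ∈ V) (X : Set S) : V ⊆ setQuot V X :=
  fun _ hv x _ => hV x _ hv

lemma setQuot_eq_iff_subset (hV : ∀ x v, v ∈ V → x * v ∈ V) (X : Set S) :
    setQuot V X = V ↔ setQuot V X ⊆ V :=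
  ⟨Eq.subset, fun h => h.antisymm (subset_setQuot hV X)⟩

end setQuot

lemma Finset.exists_subset_biUnion_of_coe_subset {α β : Type*} {s : Finset α} {X : Set β}
    {t : β → Set α} (h : ↑s ⊆ ⋃ x ∈ X, t x) : ∃ Y : Finset β, ↑Y ⊆ X ∧ ↑s ⊆ ⋃ x ∈ Y, t x := by
  classical
  induction s using Finset.induction_on with
  | empty => exact ⟨∅, by simp, by simp⟩
  | insert a s _ ih =>
    rw [Finset.coe_insert, Set.insert_subset_iff] at h
    obtain ⟨x, hx, hax⟩ := Set.mem_iUnion₂.1 h.1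
    obtain ⟨Y, hYX, hsY⟩ := ih h.2
    refine ⟨insert x Y, by simpa [Set.insert_subset_iff] using ⟨hx, hYX⟩, ?_⟩
    rw [Finset.coe_insert, Set.insert_subset_iff, Finset.set_biUnion_insert]
    exact ⟨Or.inl hax, hsY.trans Set.subset_union_right⟩

section Semiprime

variable {R : Type*} [Ring R] {I : TwoSidedIdeal R} (hsq : ∀ a : R, a ^ 2 ∈ I → a ∈ I)
include hsq

lemma mul_mem_swap_of_sq_mem {a b : R} (h : a * b ∈ I) : b * a ∈ I := by
  apply hsq
  rw [sq, mul_assoc, ← mul_assoc a]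
  exact I.mul_mem_left _ _ (I.mul_mem_right _ _ h)

lemma mul_mem_of_mul_mul_mem_of_sq_mem {a b : R} (h : a * b * a ∈ I) : a * b ∈ I := by
  apply hsq
  rw [sq, ← mul_assoc]
  exact I.mul_mem_right _ _ h

lemma mul_mem_of_sum_mul_mem_of_sq_mem {ι : Type*} [LinearOrder ι] (s : Finset ι) (a b : ι → R)
    (hsum : ∑ i ∈ s, a i * b i ∈ I) (hlt : ∀ i ∈ s, ∀ j ∈ s, i < j → a i * b j ∈ I) :
    ∀ i ∈ s, a i * b i ∈ I := by
  induction s using Finset.induction_on_min with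
  | empty => simp
  | insert m s hm ih =>
    have hms : m ∉ s := fun h => lt_irrefl m (hm m h)
    rw [Finset.sum_insert hms] at hsum
    -- `a m * b i ∈ I` gives `b i * a m ∈ I`, so right multiplication by `a m` kills the rest
    have hcross : ∀ i ∈ s, a i * b i * a m ∈ I := fun i hi => by
      rw [mul_assoc]
      refine I.mul_mem_left _ _ (mul_mem_swap_of_sq_mem hsq ?_)
      exact hlt m (s.mem_insert_self m) i (Finset.mem_insert_of_mem hi) (hm i hi)
    have hm_mem : a m * b m ∈ I := by
      refine mul_mem_of_mul_mul_mem_of_sq_mem hsq ?_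
      have : a m * b m * a m =
          (a m * b m + ∑ i ∈ s, a i * b i) * a m - ∑ i ∈ s, a i * b i * a m := by
        rw [add_mul, Finset.sum_mul]; abel
      rw [this]
      exact sub_mem (I.mul_mem_right _ _ hsum) (sum_mem hcross)
    have hs_mem : ∑ i ∈ s, a i * b i ∈ I := by simpa using sub_mem hsum hm_mem
    intro i hi
    rcases Finset.mem_insert.1 hi with rfl | hi
    · exact hm_mem
    · exact ih hs_mem (fun i hi j hj => hlt i (Finset.mem_insert_of_mem hi) j
        (Finset.mem_insert_of_mem hj)) i hi

end Semiprime

namespace HahnSeries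

/-- The paper's `X*`. -/
def coeffs {Γ R : Type*} [PartialOrder Γ] [Zero R] (X : Set (HahnSeries Γ R)) : Set R :=
  ⋃ x ∈ X, Set.range x.coeff

variable {Γ R : Type*} [AddCommGroup Γ] [LinearOrder Γ] [IsOrderedAddMonoid Γ]

lemma coeff_mul_eq_sum_image_fst [NonUnitalNonAssocSemiring R] (x y : HahnSeries Γ R) (γ : Γ) :
    (x * y).coeff γ =
      ∑ i ∈ (Finset.antidiagonal x.isPWO_support y.isPWO_support γ).image Prod.fst,
        x.coeff i * y.coeff (γ - i) := by
  rw [coeff_mul, Finset.sum_image]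
  · refine Finset.sum_congr rfl fun p hp => ?_
    rw [← (Finset.mem_antidiagonal.1 hp).2.2, add_sub_cancel_left]
  · intro p hp q hq hpq
    have hp := (Finset.mem_antidiagonal.1 hp).2.2
    have hq := (Finset.mem_antidiagonal.1 hq).2.2
    exact Prod.ext hpq (add_left_cancel ((hp.trans hq.symm).trans (by rw [hpq])))

variable [Ring R] {I : TwoSidedIdeal R}

lemma mul_mem_hahnSeriesOver (x : HahnSeries Γ R) {f : HahnSeries Γ R}
    (hf : f ∈ hahnSeriesOver Γ (I : Set R)) : x * f ∈ hahnSeriesOver Γ (I : Set R) :=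
  fun γ => by
    rw [coeff_mul]
    exact sum_mem fun p _ => I.mul_mem_left _ _ (hf p.2)

lemma coeffs_subset_iff {X : Set (HahnSeries Γ R)} {U : Set R} :
    coeffs X ⊆ U ↔ X ⊆ hahnSeriesOver Γ U := by
  simp only [coeffs, Set.iUnion₂_subset_iff, Set.range_subset_iff]
  rfl

variable (hsq : ∀ a : R, a ^ 2 ∈ I → a ∈ I)
include hsq

lemma coeff_mul_coeff_mem_of_forall_lt {y f : HahnSeries Γ R} {γ : Γ} (hγ : (y * f).coeff γ ∈ I)
    (hlt : ∀ α β, α + β < γ → y.coeff α * f.coeff β ∈ I) {α β : Γ} (h : α + β = γ) :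
    y.coeff α * f.coeff β ∈ I := by
  classical
  rw [coeff_mul_eq_sum_image_fst] at hγ
  have hdiag := mul_mem_of_sum_mul_mem_of_sq_mem hsq _ y.coeff (fun i => f.coeff (γ - i)) hγ
    fun i _ j _ hij => hlt _ _ (by rwa [add_sub_left_comm, add_lt_iff_neg_left, sub_neg])
  by_cases h0 : y.coeff α * f.coeff β = 0
  · exact h0 ▸ I.zero_mem
  obtain rfl : β = γ - α := eq_sub_of_add_eq' h
  refine hdiag α (Finset.mem_image.2 ⟨(α, γ - α), Finset.mem_antidiagonal.2 ?_, rfl⟩)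
  exact ⟨left_ne_zero_of_mul h0, right_ne_zero_of_mul h0, h⟩

lemma coeff_mul_coeff_mem_of_mul_mem {y f : HahnSeries Γ R}
    (h : y * f ∈ hahnSeriesOver Γ (I : Set R)) (α β : Γ) : y.coeff α * f.coeff β ∈ I := by
  by_contra hbad
  set T : Set Γ := {γ | ∃ α β, α + β = γ ∧ y.coeff α * f.coeff β ∉ I}
  have hT : T.IsWF := by
    refine (y.isPWO_support.add f.isPWO_support).isWF.mono ?_
    rintro _ ⟨α, β, rfl, hαβ⟩
    have h0 : y.coeff α * f.coeff β ≠ 0 := fun h0 => hαβ (h0 ▸ I.zero_mem)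
    exact Set.add_mem_add (left_ne_zero_of_mul h0) (right_ne_zero_of_mul h0)
  have hne : T.Nonempty := ⟨_, α, β, rfl, hbad⟩
  obtain ⟨α₀, β₀, h₀, hbad₀⟩ := hT.min_mem hne
  refine hbad₀ (coeff_mul_coeff_mem_of_forall_lt hsq (h _) (fun α β hlt => ?_) h₀)
  by_contra hαβ
  exact hT.not_lt_min hne ⟨α, β, rfl, hαβ⟩ hlt

lemma setQuot_hahnSeriesOver_subset_iff (X : Set (HahnSeries Γ R)) :
    setQuot (hahnSeriesOver Γ (I : Set R)) X ⊆ hahnSeriesOver Γ (I : Set R) ↔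
      setQuot (I : Set R) (coeffs X) ⊆ I := by
  constructor
  · intro hX r hr
    have hsingle : single 0 r ∈ setQuot (hahnSeriesOver Γ (I : Set R)) X := fun x hx γ => by
      rw [coeff_mul_single_zero]
      exact hr _ (Set.mem_biUnion hx ⟨γ, rfl⟩)
    simpa using hX hsingle 0
  · intro hX f hf δ
    refine hX fun r hr => ?_
    obtain ⟨x, hx, γ, rfl⟩ := Set.mem_iUnion₂.1 hr
    exact coeff_mul_coeff_mem_of_mul_mem hsq (hf x hx) γ δ

end HahnSeries

open HahnSeries in
/-- If `U` is a semiprime ideal of `R` and `R` is `Σ_U`-zip, then the Hahn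
series ring `R((Γ))` is `Σ_{U((Γ))}`-zip. -/
theorem sigmaZip_hahnSeries_of_sigmaZip {R : Type*} [Ring R] (Γ : Type*)
    [AddCommGroup Γ] [LinearOrder Γ] [IsOrderedAddMonoid Γ] (U : Set R)
    (hIdeal : IsTwoSidedIdeal U)
    (hSemiprime : ∀ a : R, ∀ n : ℕ, 0 < n → a ^ n ∈ U → a ∈ U)
    (hZip : IsSigmaZip R U) :
    IsSigmaZip (HahnSeries Γ R) (hahnSeriesOver Γ U) := by
  obtain ⟨I, rfl⟩ := hIdeal.exists_twoSidedIdeal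
  have hsq : ∀ a : R, a ^ 2 ∈ I → a ∈ I := fun a => hSemiprime a 2 two_pos
  have hI : ∀ x v, v ∈ (I : Set R) → x * v ∈ (I : Set R) := I.mul_mem_left
  have hV : ∀ x v, v ∈ hahnSeriesOver Γ (I : Set R) → x * v ∈ hahnSeriesOver Γ (I : Set R) :=
    fun x _ hv => mul_mem_hahnSeriesOver x hv
  intro X hX hXquot
  rw [← coeffs_subset_iff] at hX
  rw [setQuot_eq_iff_subset hV, setQuot_hahnSeriesOver_subset_iff hsq,
    ← setQuot_eq_iff_subset hI] at hXquot
  obtain ⟨Y₀, hY₀X, hY₀⟩ := hZip _ hX hXquot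
  obtain ⟨Y, hYX, hY₀Y⟩ := Finset.exists_subset_biUnion_of_coe_subset hY₀X
  refine ⟨Y, hYX, ?_⟩
  rw [setQuot_eq_iff_subset hV, setQuot_hahnSeriesOver_subset_iff hsq]
  exact (setQuot_anti hY₀Y).trans hY₀.subset
end

section
/- If the Hahn series ring R((Γ)) over a linearly ordered abelian group Γ is a Σ_{U((Γ))}-zip ring, then R is a Σ_U-zip ring, where U is an ideal of R and U((Γ)) consists of Hahn series with all coefficients in U. -/
/-!
Embed `R` into `R((Γ))` by constant series `r ↦ r·t⁰`. Since `(x·t⁰)·f` has coefficients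
`x·f_γ`, the quotient `(U((Γ)) : X·t⁰)` is `(U : X)((Γ))`. So a subset `X ⊆ R` witnessing the
hypothesis of the `Σ_U`-zip property gives the witness `X·t⁰` in `R((Γ))`; the finite subset
found there consists of constants `Y·t⁰` with `Y ⊆ X` finite, and `(U : Y)((Γ)) = U((Γ))`
forces `(U : Y) = U`.
-/

namespace HahnSeries

variable {R : Type*} [Ring R] {Γ : Type*} [AddCommGroup Γ] [LinearOrder Γ] [IsOrderedAddMonoid Γ]

theorem setQuot_hahnSeriesOver_image_single_zero (U X : Set R) :
    setQuot (hahnSeriesOver Γ U) (single (0 : Γ) '' X) = hahnSeriesOver Γ (setQuot U X) := by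
  ext f
  simp only [setQuot, hahnSeriesOver, Set.forall_mem_image, Set.mem_ofPred_eq,
    coeff_single_zero_mul]
  exact ⟨fun h γ x hx => h hx γ, fun h x hx γ => h γ x hx⟩

theorem single_zero_mem_hahnSeriesOver_iff {U : Set R} (hU : 0 ∈ U) {r : R} :
    single (0 : Γ) r ∈ hahnSeriesOver Γ U ↔ r ∈ U := by
  refine ⟨fun h => by simpa using h 0, fun hr γ => ?_⟩
  rw [coeff_single]
  split_ifs
  exacts [hr, hU]

theorem hahnSeriesOver_injOn_zero_mem :
    Set.InjOn (hahnSeriesOver (R := R) Γ) {U | 0 ∈ U} := by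
  intro A (hA : 0 ∈ A) B (hB : 0 ∈ B) hAB
  ext r
  rw [← single_zero_mem_hahnSeriesOver_iff (Γ := Γ) hA, hAB,
    single_zero_mem_hahnSeriesOver_iff hB]

end HahnSeries

open HahnSeries in
/-- If the Hahn series ring `R((Γ))` is `Σ_{U((Γ))}`-zip, then `R` is `Σ_U`-zip. -/
theorem sigmaZip_of_sigmaZip_hahnSeries {R : Type*} [Ring R] (Γ : Type*)
    [AddCommGroup Γ] [LinearOrder Γ] [IsOrderedAddMonoid Γ] (U : Set R) (hIdeal : IsTwoSidedIdeal U)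
    (hZip : IsSigmaZip (HahnSeries Γ R) (hahnSeriesOver Γ U)) :
    IsSigmaZip R U := by
  classical
  intro X hXU hQuot
  have hU : (0 : R) ∈ U := hIdeal.1
  have hX'U : ¬ single (0 : Γ) '' X ⊆ hahnSeriesOver Γ U := fun h =>
    hXU fun x hx => (single_zero_mem_hahnSeriesOver_iff hU).1 (h ⟨x, hx, rfl⟩)
  obtain ⟨Y', hY'X, hY'⟩ := hZip _ hX'U (by rw [setQuot_hahnSeriesOver_image_single_zero, hQuot])
  obtain ⟨Y, hYX, rfl⟩ := Finset.subset_set_image_iff.1 hY'X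
  refine ⟨Y, hYX, hahnSeriesOver_injOn_zero_mem (Γ := Γ) (fun y _ => by simpa using hU) hU ?_⟩
  rwa [Finset.coe_image, setQuot_hahnSeriesOver_image_single_zero] at hY'
end

section
/- Let R be the trivial extension T(ℤ/4ℤ, ℤ/4ℤ), i.e., the ring of matrices {(a b; 0 a) | a, b ∈ ℤ/4ℤ}, and let U = {(0 m; 0 0) | m ∈ ℤ/4ℤ}. Then U is an ideal of R and R is a Σ_U-zip ring. -/
lemma zmod4_key : ∀ a b : ZMod 4, a * 2 ≠ 0 → a * b = 0 → b = 0 := by decide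

/-- In the trivial extension `T(ℤ/4ℤ, ℤ/4ℤ)`, the set
`U = {(0, m) | m ∈ ℤ/4ℤ}` is an ideal and the ring is `Σ_U`-zip. -/
theorem trivSqZeroExt_zmod4_sigmaZip :
    IsTwoSidedIdeal {x : TrivSqZeroExt (ZMod 4) (ZMod 4) | x.fst = 0} ∧
      IsSigmaZip (TrivSqZeroExt (ZMod 4) (ZMod 4))
        {x : TrivSqZeroExt (ZMod 4) (ZMod 4) | x.fst = 0} := by
  constructor
  · refine ⟨rfl, ?_, ?_, ?_, ?_⟩
    · intro a ha b hb
      simp only [Set.mem_setOf_eq] at ha hb ⊢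
      rw [TrivSqZeroExt.fst_add, ha, hb, add_zero]
    · intro a ha
      simp only [Set.mem_setOf_eq] at ha ⊢
      rw [TrivSqZeroExt.fst_neg, ha, neg_zero]
    · intro a ha r
      simp only [Set.mem_setOf_eq] at ha ⊢
      rw [TrivSqZeroExt.fst_mul, ha, zero_mul]
    · intro a ha r
      simp only [Set.mem_setOf_eq] at ha ⊢
      rw [TrivSqZeroExt.fst_mul, ha, mul_zero]
  · intro X hX hQ
    -- the element (2, 0) is not in U, hence not in setQuot U X
    have h2 : (TrivSqZeroExt.inl (2 : ZMod 4) : TrivSqZeroExt (ZMod 4) (ZMod 4)) ∉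
        ({x : TrivSqZeroExt (ZMod 4) (ZMod 4) | x.fst = 0}) := by
      simp only [Set.mem_setOf_eq, TrivSqZeroExt.fst_inl]
      decide
    rw [← hQ] at h2
    simp only [setQuot, Set.mem_setOf_eq, not_forall] at h2
    obtain ⟨x, hxX, hx⟩ := h2
    refine ⟨{x}, by simpa using hxX, ?_⟩
    ext r
    simp only [setQuot, Finset.coe_singleton, Set.mem_singleton_iff, Set.mem_setOf_eq,
      forall_eq, TrivSqZeroExt.fst_mul]
    constructor
    · intro h
      exact zmod4_key x.fst r.fst (by simpa [TrivSqZeroExt.fst_mul, TrivSqZeroExt.fst_inl] using hx) h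
    · intro h
      rw [h, mul_zero]
end
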